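/- Under the hypotheses above, the domain of the Lax operator L_u⁺ (i.e. {g ∈ H^{1/2}_+ : B_u g ∈ H_+}) is contained in H^{1-s}_+; in particular every eigenfunction of L_u = L_u⁺ − (1 + η_s(‖u‖_{-s})) lies in H^{1-s}_+. -/

import Mathlib

noncomputable section

open scoped BigOperators

/-- The weight `⟨n⟩ = max 1 |n|`. -/
def wt (n : ℤ) : ℝ := max 1 |n|

/-- A Fourier coefficient sequence belongs to the Sobolev space `H^t(𝕋, ℂ)`. -/
def MemSob (t : ℝ) (a : ℤ → ℂ) : Prop :=
  Summable fun n : ℤ => wt n ^ (2 * t) * ‖a n‖ ^ 2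

/-- The Sobolev `H^t` norm of a Fourier coefficient sequence. -/
def sobNorm (t : ℝ) (a : ℤ → ℂ) : ℝ :=
  Real.sqrt (∑' n : ℤ, wt n ^ (2 * t) * ‖a n‖ ^ 2)

/-- `f` lies in the Hardy space: vanishing negative Fourier modes. -/
def PlusSupp (b : ℤ → ℂ) : Prop := ∀ n : ℤ, n < 0 → b n = 0

/-- `u` is real valued: `conj (û(n)) = û(-n)`. -/
def RealCoeff (a : ℤ → ℂ) : Prop := ∀ n : ℤ, (starRingEnd ℂ) (a n) = a (-n)

/-- `η_s(r) = r (2(1+r))^{(1+2s)/(1-2s)} C²`. -/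
def etaS (s C r : ℝ) : ℝ := r * (2 * (1 + r)) ^ ((1 + 2 * s) / (1 - 2 * s)) * C ^ 2

/-- The Toeplitz operator `T_u f = Π(uf)` in Fourier coefficients (before
projection): `(uf)^(n) = ∑_m û(n-m) f̂(m)`. -/
def toeplitz (a b : ℤ → ℂ) (n : ℤ) : ℂ := ∑' m : ℤ, a (n - m) * b m

/-- `B_u f = Df − T_u f + (1+η) f` in Fourier coefficients, with the Szegő
projection `Π` cutting off negative modes. -/
def BuC (a : ℤ → ℂ) (η : ℝ) (b : ℤ → ℂ) (n : ℤ) : ℂ :=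
  if n < 0 then 0 else (n : ℂ) * b n - toeplitz a b n + (1 + η) * b n

/-!
For `n ≥ 0` the equation `B_u g = h` reads `n ĝ(n) = ĥ(n) + (û * ĝ)(n) - (1 + η) ĝ(n)`, so
`⟨n⟩^{1-c} |ĝ(n)|` is bounded by `|ĥ(n)|`, `|ĝ(n)|` and `⟨n⟩^{-c} (|û| * |ĝ|)(n)`. The product
estimate `H^{-s} · H^σ ⊆ H^{-c}`, valid for `s ≤ c`, `s ≤ σ` and `σ + c - s > 1/2`, therefore
upgrades `g ∈ H^σ` to `g ∈ H^{1-c}`. Starting from `σ = 1/2` this reaches `H^{3/4 - s/2}`, and a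
second step from there reaches `H^{1-s}`. An eigenfunction has `B_u g = (μ + 1 + η) g ∈ L²`.

The product estimate is proved for absolute values of Fourier coefficients in `ℝ≥0∞`, where every
series has a value: splitting according to which of `⟨n - m⟩`, `⟨n⟩`, `⟨m⟩` is smallest reduces it
to Young's inequality `ℓ¹ * ℓ² ⊆ ℓ²` and to `⟨·⟩^{s-σ-c} ∈ ℓ²`.
-/

open scoped ENNReal

namespace FourierSeq

section SqSummable

variable {ι : Type*}

def SqSummable (f : ι → ℝ≥0∞) : Prop := ∑' i, f i ^ 2 ≠ ∞

lemma summable_iff_tsum_ofReal_ne_top {f : ι → ℝ} (hf : ∀ i, 0 ≤ f i) :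
    Summable f ↔ ∑' i, ENNReal.ofReal (f i) ≠ ∞ :=
  ⟨Summable.tsum_ofReal_ne_top, fun h =>
    (ENNReal.summable_toReal h).congr fun i => ENNReal.toReal_ofReal (hf i)⟩

lemma mul_le_sq_add_sq (x y : ℝ≥0∞) : x * y ≤ x ^ 2 + y ^ 2 := by
  rcases le_total x y with h | h
  · calc x * y ≤ y ^ 2 := by rw [sq]; gcongr
      _ ≤ x ^ 2 + y ^ 2 := le_add_self
  · calc x * y ≤ x ^ 2 := by rw [sq]; gcongr
      _ ≤ x ^ 2 + y ^ 2 := le_self_add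

lemma sq_add_le (x y : ℝ≥0∞) : (x + y) ^ 2 ≤ 3 * (x ^ 2 + y ^ 2) := by
  calc (x + y) ^ 2 = x ^ 2 + y ^ 2 + 2 * (x * y) := by ring
    _ ≤ x ^ 2 + y ^ 2 + 2 * (x ^ 2 + y ^ 2) := by gcongr; exact mul_le_sq_add_sq x y
    _ = 3 * (x ^ 2 + y ^ 2) := by ring

lemma sq_tsum_mul_le (f g : ι → ℝ≥0∞) :
    (∑' i, f i * g i) ^ 2 ≤ (∑' i, f i ^ 2) * ∑' i, g i ^ 2 := by
  let _ : MeasurableSpace ι := ⊤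
  have _ : MeasurableSingletonClass ι := ⟨fun _ => trivial⟩
  have h := ENNReal.lintegral_mul_le_Lp_mul_Lq MeasureTheory.Measure.count
    Real.HolderConjugate.two_two measurable_from_top.aemeasurable
    measurable_from_top.aemeasurable (f := f) (g := g)
  simp only [MeasureTheory.lintegral_count, Pi.mul_apply, ENNReal.rpow_two] at h
  calc (∑' i, f i * g i) ^ 2
      ≤ ((∑' i, f i ^ 2) ^ (1 / 2 : ℝ) * (∑' i, g i ^ 2) ^ (1 / 2 : ℝ)) ^ 2 := by gcongr
    _ = (∑' i, f i ^ 2) * ∑' i, g i ^ 2 := by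
      rw [mul_pow, ← ENNReal.rpow_two, ← ENNReal.rpow_two, ← ENNReal.rpow_mul,
        ← ENNReal.rpow_mul]
      norm_num

namespace SqSummable

variable {f g : ι → ℝ≥0∞}

lemma mono (hg : SqSummable g) (h : ∀ i, f i ≤ g i) : SqSummable f :=
  ne_top_of_le_ne_top hg (ENNReal.tsum_le_tsum fun i => by gcongr; exact h i)

lemma const_mul (hf : SqSummable f) {c : ℝ≥0∞} (hc : c ≠ ∞) : SqSummable fun i => c * f i := by
  simp only [SqSummable, mul_pow, ENNReal.tsum_mul_left]
  exact ENNReal.mul_ne_top (by simpa using hc) hf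

lemma add (hf : SqSummable f) (hg : SqSummable g) : SqSummable fun i => f i + g i := by
  refine ne_top_of_le_ne_top ?_ (ENNReal.tsum_le_tsum fun i => sq_add_le (f i) (g i))
  rw [ENNReal.tsum_mul_left, ENNReal.tsum_add]
  exact ENNReal.mul_ne_top (by simp) (ENNReal.add_ne_top.2 ⟨hf, hg⟩)

lemma tsum_mul_ne_top (hf : SqSummable f) (hg : SqSummable g) : ∑' i, f i * g i ≠ ∞ := by
  refine ne_top_of_le_ne_top ?_ (ENNReal.tsum_le_tsum fun i => mul_le_sq_add_sq (f i) (g i))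
  rw [ENNReal.tsum_add]
  exact ENNReal.add_ne_top.2 ⟨hf, hg⟩

end SqSummable

end SqSummable

section Convolution

def seqConv (c d : ℤ → ℝ≥0∞) (n : ℤ) : ℝ≥0∞ := ∑' m, c (n - m) * d m

lemma tsum_comp_sub_left (c : ℤ → ℝ≥0∞) (n : ℤ) : ∑' m, c (n - m) = ∑' k, c k :=
  Equiv.tsum_eq (Equiv.subLeft n) c

lemma seqConv_comm (c d : ℤ → ℝ≥0∞) : seqConv c d = seqConv d c := by
  funext n
  rw [seqConv, ← Equiv.tsum_eq (Equiv.subLeft n)]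
  simp only [seqConv, Equiv.subLeft_apply, sub_sub_cancel, mul_comm]

lemma sq_seqConv_le (c d : ℤ → ℝ≥0∞) (n : ℤ) :
    seqConv c d n ^ 2 ≤ (∑' k, c k) * seqConv c (fun m => d m ^ 2) n := by
  have hsqrt (x : ℝ≥0∞) : (x ^ (2⁻¹ : ℝ)) ^ 2 = x := by
    simpa using ENNReal.rpow_inv_natCast_pow (x := x) two_ne_zero
  have h := sq_tsum_mul_le (fun m => c (n - m) ^ (2⁻¹ : ℝ))
    (fun m => c (n - m) ^ (2⁻¹ : ℝ) * d m)
  simp only [← mul_assoc, ← sq, mul_pow, hsqrt] at h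
  rwa [tsum_comp_sub_left c n] at h

lemma sqSummable_seqConv {c d : ℤ → ℝ≥0∞} (hc : ∑' k, c k ≠ ∞) (hd : SqSummable d) :
    SqSummable (seqConv c d) := by
  refine ne_top_of_le_ne_top ?_ (ENNReal.tsum_le_tsum fun n => sq_seqConv_le c d n)
  have hswap : ∑' n, seqConv c (fun m => d m ^ 2) n = (∑' k, c k) * ∑' m, d m ^ 2 := by
    have hshift (m : ℤ) : ∑' n, c (n - m) = ∑' k, c k := Equiv.tsum_eq (Equiv.subRight m) c
    simp only [seqConv]
    rw [ENNReal.tsum_comm]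
    simp only [ENNReal.tsum_mul_right, hshift, ENNReal.tsum_mul_left]
  rw [ENNReal.tsum_mul_left, hswap]
  exact ENNReal.mul_ne_top hc (ENNReal.mul_ne_top hc hd)

lemma seqConv_le_tsum_sq_add (c d : ℤ → ℝ≥0∞) (n : ℤ) :
    seqConv c d n ≤ ∑' k, c k ^ 2 + ∑' m, d m ^ 2 := by
  calc seqConv c d n ≤ ∑' m, (c (n - m) ^ 2 + d m ^ 2) :=
        ENNReal.tsum_le_tsum fun m => mul_le_sq_add_sq _ _
    _ = ∑' k, c k ^ 2 + ∑' m, d m ^ 2 := by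
        rw [ENNReal.tsum_add, tsum_comp_sub_left (fun k => c k ^ 2) n]

end Convolution

lemma rpow_kernel_le {x y z s σ c : ℝ} (hx : 0 < x) (hy : 0 < y) (hz : 0 < z)
    (hxyz : x ≤ y + z) (hs : 0 ≤ s) (hsc : s ≤ c) (hsσ : s ≤ σ) :
    y ^ (-c) * x ^ s * z ^ (-σ) ≤
      2 ^ s * (x ^ (s - σ - c) + y ^ (s - σ - c) + z ^ (s - σ - c)) := by
  have h2s : 1 ≤ (2 : ℝ) ^ s := Real.one_le_rpow (by norm_num) hs
  have hxE := Real.rpow_nonneg hx.le (s - σ - c)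
  have hyE := Real.rpow_nonneg hy.le (s - σ - c)
  have hzE := Real.rpow_nonneg hz.le (s - σ - c)
  have hmin : (x ≤ y ∧ x ≤ z) ∨ (y ≤ x ∧ y ≤ z) ∨ (z ≤ x ∧ z ≤ y) := by
    rcases le_total x y with h | h <;> rcases le_total x z with h' | h' <;>
      rcases le_total y z with h'' | h'' <;> grind
  rcases hmin with ⟨hxy, hxz⟩ | ⟨hyx, hyz⟩ | ⟨hzx, hzy⟩
  · calc y ^ (-c) * x ^ s * z ^ (-σ) ≤ x ^ (-c) * x ^ s * x ^ (-σ) := by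
          gcongr ?_ * _ * ?_
          · exact Real.rpow_le_rpow_of_nonpos hx hxy (by linarith)
          · exact Real.rpow_le_rpow_of_nonpos hx hxz (by linarith)
      _ = 1 * x ^ (s - σ - c) := by
          rw [← Real.rpow_add hx, ← Real.rpow_add hx]; ring_nf
      _ ≤ _ := mul_le_mul h2s (by linarith) (by positivity) (by positivity)
  · calc y ^ (-c) * x ^ s * z ^ (-σ) ≤ y ^ (-c) * (2 * z) ^ s * z ^ (-σ) := by
          gcongr _ * ?_ * _; exact Real.rpow_le_rpow hx.le (by linarith) hs
      _ = 2 ^ s * (y ^ (-c) * z ^ (s - σ)) := by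
          rw [Real.mul_rpow (by norm_num) hz.le, sub_eq_add_neg s σ, Real.rpow_add hz]; ring
      _ ≤ 2 ^ s * (y ^ (-c) * y ^ (s - σ)) := by
          gcongr _ * (_ * ?_); exact Real.rpow_le_rpow_of_nonpos hy hyz (by linarith)
      _ = 2 ^ s * y ^ (s - σ - c) := by rw [← Real.rpow_add hy]; ring_nf
      _ ≤ _ := by gcongr; linarith
  · calc y ^ (-c) * x ^ s * z ^ (-σ) ≤ y ^ (-c) * (2 * y) ^ s * z ^ (-σ) := by
          gcongr _ * ?_ * _; exact Real.rpow_le_rpow hx.le (by linarith) hs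
      _ = 2 ^ s * (y ^ (s - c) * z ^ (-σ)) := by
          rw [Real.mul_rpow (by norm_num) hy.le, sub_eq_neg_add s c, Real.rpow_add hy]; ring
      _ ≤ 2 ^ s * (z ^ (s - c) * z ^ (-σ)) := by
          gcongr _ * (?_ * _); exact Real.rpow_le_rpow_of_nonpos hz hzy (by linarith)
      _ = 2 ^ s * z ^ (s - σ - c) := by rw [← Real.rpow_add hz]; ring_nf
      _ ≤ _ := by gcongr; linarith

section Weights

lemma one_le_wt (n : ℤ) : 1 ≤ wt n := le_max_left _ _

lemma wt_pos (n : ℤ) : 0 < wt n := one_pos.trans_le (one_le_wt n)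

lemma wt_sub_le (n m : ℤ) : wt (n - m) ≤ wt n + wt m := by
  have hn : |(n : ℝ)| ≤ wt n := le_max_right _ _
  have hm : |(m : ℝ)| ≤ wt m := le_max_right _ _
  refine max_le (by linarith [one_le_wt n, one_le_wt m]) ?_
  calc |((n - m : ℤ) : ℝ)| ≤ |(n : ℝ)| + |(m : ℝ)| := by push_cast; exact abs_sub _ _
    _ ≤ wt n + wt m := add_le_add hn hm

def wpow (t : ℝ) (n : ℤ) : ℝ≥0∞ := ENNReal.ofReal (wt n ^ t)

lemma wpow_add (t u : ℝ) (n : ℤ) : wpow (t + u) n = wpow t n * wpow u n := by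
  rw [wpow, wpow, wpow, Real.rpow_add (wt_pos n),
    ENNReal.ofReal_mul (Real.rpow_nonneg (wt_pos n).le _)]

lemma wpow_zero (n : ℤ) : wpow 0 n = 1 := by simp [wpow]

lemma wpow_le_one {t : ℝ} (ht : t ≤ 0) (n : ℤ) : wpow t n ≤ 1 :=
  ENNReal.ofReal_le_one.2 (Real.rpow_le_one_of_one_le_of_nonpos (one_le_wt n) ht)

lemma wpow_mul_wpow_neg (t : ℝ) (n : ℤ) : wpow t n * wpow (-t) n = 1 := by
  rw [← wpow_add, add_neg_cancel, wpow_zero]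

lemma wpow_sq (t : ℝ) (n : ℤ) : wpow t n ^ 2 = wpow (2 * t) n := by
  rw [two_mul, wpow_add, sq]

lemma wpow_one_le (n : ℤ) : wpow 1 n ≤ ‖(n : ℂ)‖ₑ + 1 := by
  rw [wpow, Real.rpow_one, ← ofReal_norm, ← ENNReal.ofReal_one,
    ← ENNReal.ofReal_add (norm_nonneg _) zero_le_one, Complex.norm_intCast]
  exact ENNReal.ofReal_le_ofReal (max_le (by linarith [abs_nonneg (n : ℝ)]) (by linarith))

lemma summable_wt_rpow {t : ℝ} (ht : t < -1) : Summable fun n : ℤ => wt n ^ t := by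
  refine (Real.summable_abs_int_rpow (b := -t) (by linarith)).congr_cofinite ?_
  filter_upwards [Filter.eventually_cofinite_ne 0] with n hn
  have h1 : (1 : ℝ) ≤ |(n : ℝ)| := by exact_mod_cast Int.one_le_abs hn
  rw [neg_neg, wt, max_eq_right h1]

lemma sqSummable_wpow {t : ℝ} (ht : t < -1 / 2) : SqSummable (wpow t) := by
  change ∑' n, wpow t n ^ 2 ≠ ∞
  simp only [wpow_sq]
  exact (summable_wt_rpow (by linarith)).tsum_ofReal_ne_top

lemma wpow_kernel_le {s σ c : ℝ} (hs : 0 ≤ s) (hsc : s ≤ c) (hsσ : s ≤ σ) (n m : ℤ) :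
    wpow (-c) n * wpow s (n - m) * wpow (-σ) m ≤
      2 ^ s * (wpow (s - σ - c) (n - m) + wpow (s - σ - c) n + wpow (s - σ - c) m) := by
  have h0 (t : ℝ) (k : ℤ) : 0 ≤ wt k ^ t := Real.rpow_nonneg (wt_pos k).le t
  have h2 : (2 : ℝ≥0∞) ^ s = ENNReal.ofReal (2 ^ s) := by
    rw [← ENNReal.ofReal_rpow_of_pos two_pos, ENNReal.ofReal_ofNat]
  simp only [wpow, h2, ← ENNReal.ofReal_mul (h0 _ _), ← ENNReal.ofReal_add (h0 _ _) (h0 _ _),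
    ← ENNReal.ofReal_add (add_nonneg (h0 _ _) (h0 _ _)) (h0 _ _),
    ← ENNReal.ofReal_mul (Real.rpow_nonneg zero_le_two s),
    ← ENNReal.ofReal_mul (mul_nonneg (h0 _ _) (h0 _ _))]
  exact ENNReal.ofReal_le_ofReal
    (rpow_kernel_le (wt_pos _) (wt_pos n) (wt_pos m) (wt_sub_le n m) hs hsc hsσ)

end Weights

theorem sqSummable_wpow_mul_seqConv {s σ c : ℝ} (hs : 0 ≤ s) (hsc : s ≤ c) (hsσ : s ≤ σ)
    (hE : s - σ - c < -1 / 2) {A G : ℤ → ℝ≥0∞}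
    (hA : SqSummable fun k => wpow (-s) k * A k) (hG : SqSummable fun m => wpow σ m * G m) :
    SqSummable fun n => wpow (-c) n * seqConv A G n := by
  set E := s - σ - c
  set α := fun k => wpow (-s) k * A k
  set γ := fun m => wpow σ m * G m
  have hterm (n m : ℤ) : wpow (-c) n * (A (n - m) * G m) ≤
      2 ^ s * (wpow E (n - m) * α (n - m) * γ m + α (n - m) * (wpow E m * γ m) +
        wpow E n * (α (n - m) * γ m)) := by
    have hAα (k : ℤ) : A k = wpow s k * α k := by
      simp only [α, ← mul_assoc, wpow_mul_wpow_neg, one_mul]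
    have hGγ (k : ℤ) : G k = wpow (-σ) k * γ k := by
      simp only [γ, ← mul_assoc, ← wpow_add, neg_add_cancel, wpow_zero, one_mul]
    calc wpow (-c) n * (A (n - m) * G m)
        = wpow (-c) n * wpow s (n - m) * wpow (-σ) m * (α (n - m) * γ m) := by
          rw [hAα, hGγ]; ring
      _ ≤ 2 ^ s * (wpow E (n - m) + wpow E n + wpow E m) * (α (n - m) * γ m) := by
          gcongr ?_ * _; exact wpow_kernel_le hs hsc hsσ n m
      _ = _ := by ring
  have hpoint (n : ℤ) : wpow (-c) n * seqConv A G n ≤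
      2 ^ s * (seqConv (fun k => wpow E k * α k) γ n + seqConv α (fun m => wpow E m * γ m) n +
        wpow E n * seqConv α γ n) := by
    rw [seqConv, ← ENNReal.tsum_mul_left]
    refine (ENNReal.tsum_le_tsum (hterm n)).trans_eq ?_
    rw [ENNReal.tsum_mul_left, ENNReal.tsum_add, ENNReal.tsum_add, ENNReal.tsum_mul_left]
    rfl
  have hwE : SqSummable (wpow E) := sqSummable_wpow hE
  have hK := sqSummable_seqConv (hwE.tsum_mul_ne_top hA) hG
  have hM := sqSummable_seqConv (hwE.tsum_mul_ne_top hG) hA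
  rw [← seqConv_comm] at hM
  have hN : SqSummable fun n => wpow E n * seqConv α γ n :=
    (hwE.const_mul (ENNReal.add_ne_top.2 ⟨hA, hG⟩)).mono fun n => by
      rw [mul_comm]; gcongr; exact seqConv_le_tsum_sq_add α γ n
  exact ((hK.add hM).add hN).const_mul (ENNReal.rpow_ne_top_of_nonneg hs ENNReal.ofNat_ne_top)
    |>.mono hpoint

end FourierSeq

open FourierSeq

section Sobolev

lemma memSob_iff_sqSummable (t : ℝ) (b : ℤ → ℂ) :
    MemSob t b ↔ SqSummable fun n => wpow t n * ‖b n‖ₑ := by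
  have h0 (n : ℤ) : 0 ≤ wt n ^ (2 * t) := Real.rpow_nonneg (wt_pos n).le _
  have h (n : ℤ) : ENNReal.ofReal (wt n ^ (2 * t) * ‖b n‖ ^ 2) = (wpow t n * ‖b n‖ₑ) ^ 2 := by
    rw [mul_pow, wpow_sq, wpow, ENNReal.ofReal_mul (h0 n), ENNReal.ofReal_pow (norm_nonneg _),
      ofReal_norm]
  rw [MemSob, summable_iff_tsum_ofReal_ne_top fun n => mul_nonneg (h0 n) (sq_nonneg _),
    tsum_congr h]
  rfl

lemma MemSob.of_le {t t' : ℝ} {b : ℤ → ℂ} (hb : MemSob t b) (ht : t' ≤ t) : MemSob t' b :=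
  hb.of_nonneg_of_le (fun n => mul_nonneg (Real.rpow_nonneg (wt_pos n).le _) (sq_nonneg _))
    fun n => by gcongr; exact one_le_wt n

lemma MemSob.const_mul {t : ℝ} {b : ℤ → ℂ} (hb : MemSob t b) (z : ℂ) :
    MemSob t fun n => z * b n := by
  simpa [MemSob, norm_mul, mul_pow, mul_left_comm] using hb.mul_left (‖z‖ ^ 2)

end Sobolev

lemma enorm_toeplitz_le (a b : ℤ → ℂ) (n : ℤ) :
    ‖toeplitz a b n‖ₑ ≤ seqConv (fun k => ‖a k‖ₑ) (fun m => ‖b m‖ₑ) n :=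
  enorm_tsum_le_tsum_enorm.trans_eq (tsum_congr fun _ => enorm_mul _ _)

lemma wpow_one_mul_enorm_le {a g : ℤ → ℂ} (hg : PlusSupp g) (η : ℝ) (n : ℤ) :
    wpow 1 n * ‖g n‖ₑ ≤ ‖BuC a η g n‖ₑ + seqConv (fun k => ‖a k‖ₑ) (fun m => ‖g m‖ₑ) n +
      (‖(1 + η : ℂ)‖ₑ + 1) * ‖g n‖ₑ := by
  rcases lt_or_ge n 0 with hn | hn
  · simp [hg n hn]
  have heq : (n : ℂ) * g n = BuC a η g n + toeplitz a g n - (1 + η) * g n := by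
    rw [BuC, if_neg hn.not_gt]; ring
  calc wpow 1 n * ‖g n‖ₑ ≤ (‖(n : ℂ)‖ₑ + 1) * ‖g n‖ₑ := by gcongr; exact wpow_one_le n
    _ = ‖(n : ℂ) * g n‖ₑ + ‖g n‖ₑ := by rw [add_mul, one_mul, enorm_mul]
    _ ≤ ‖BuC a η g n‖ₑ + ‖toeplitz a g n‖ₑ + ‖(1 + η : ℂ)‖ₑ * ‖g n‖ₑ + ‖g n‖ₑ := by
        rw [heq, ← enorm_mul]
        gcongr
        exact enorm_sub_le.trans (add_le_add (enorm_add_le _ _) le_rfl)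
    _ ≤ _ := by
        grw [enorm_toeplitz_le]
        rw [add_mul, one_mul, add_assoc]

lemma memSob_one_sub_of_memSob_BuC {s σ c η : ℝ} (hs : 0 ≤ s) (hsc : s ≤ c) (hsσ : s ≤ σ)
    (hE : s - σ - c < -1 / 2) {a g : ℤ → ℂ} (ha : MemSob (-s) a) (hg : PlusSupp g)
    (hgσ : MemSob σ g) (hB : MemSob 0 (BuC a η g)) : MemSob (1 - c) g := by
  have hg0 := (memSob_iff_sqSummable 0 g).1 (hgσ.of_le (hs.trans hsσ))
  rw [memSob_iff_sqSummable] at ha hgσ hB ⊢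
  simp only [wpow_zero, one_mul] at hg0 hB
  have hΦ := sqSummable_wpow_mul_seqConv hs hsc hsσ hE ha hgσ
  have hκ : ‖(1 + η : ℂ)‖ₑ + 1 ≠ ∞ := by simp
  refine ((hB.add hΦ).add (hg0.const_mul hκ)).mono fun n => ?_
  have hwc : wpow (-c) n ≤ 1 := wpow_le_one (by linarith) n
  calc wpow (1 - c) n * ‖g n‖ₑ = wpow (-c) n * (wpow 1 n * ‖g n‖ₑ) := by
        rw [sub_eq_neg_add, wpow_add, mul_assoc]
    _ ≤ wpow (-c) n * (‖BuC a η g n‖ₑ + seqConv (fun k => ‖a k‖ₑ) (fun m => ‖g m‖ₑ) n +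
          (‖(1 + η : ℂ)‖ₑ + 1) * ‖g n‖ₑ) := by
        gcongr; exact wpow_one_mul_enorm_le hg η n
    _ ≤ _ := by
        rw [mul_add, mul_add, mul_left_comm (wpow (-c) n)]
        gcongr <;> exact mul_le_of_le_one_left' hwc

theorem memSob_one_sub_of_memSob_half {s η : ℝ} (hs0 : 0 ≤ s) (hs : s < 1 / 2)
    {a g : ℤ → ℂ} (ha : MemSob (-s) a) (hg : PlusSupp g) (hg12 : MemSob (1 / 2) g)
    (hB : MemSob 0 (BuC a η g)) : MemSob (1 - s) g := by
  have h := memSob_one_sub_of_memSob_BuC (c := 1 / 4 + s / 2) hs0 (by linarith) (by linarith)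
    (by linarith) ha hg hg12 hB
  exact memSob_one_sub_of_memSob_BuC hs0 le_rfl (by linarith) (by linarith) ha hg h hB

/-- For `0 ≤ s < 1/2` and `u ∈ H^{-s}(𝕋,ℝ)` with zero mean, the domain of the
Lax operator `L_u⁺`, i.e. `{g ∈ H^{1/2}_+ : B_u g ∈ H_+}`, is contained in
`H^{1-s}_+`; in particular every eigenfunction of
`L_u = L_u⁺ − (1 + η_s(‖u‖_{-s}))` lies in `H^{1-s}_+`. -/
theorem stmt8 (s : ℝ) (hs0 : 0 ≤ s) (hs : s < 1 / 2) :
    ∃ C > 0, ∀ a : ℤ → ℂ, RealCoeff a → a 0 = 0 → MemSob (-s) a →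
      (∀ g : ℤ → ℂ, PlusSupp g → MemSob (1 / 2) g →
        MemSob 0 (BuC a (etaS s C (sobNorm (-s) a)) g) → MemSob (1 - s) g) ∧
      (∀ (μ : ℝ) (g : ℤ → ℂ), PlusSupp g → MemSob (1 / 2) g → g ≠ 0 →
        (∀ n : ℤ, BuC a (etaS s C (sobNorm (-s) a)) g n =
          ((μ + 1 + etaS s C (sobNorm (-s) a) : ℝ) : ℂ) * g n) →
        MemSob (1 - s) g) := by
  refine ⟨1, one_pos, fun a _ _ ha => ⟨fun g hg hg12 hB =>
    memSob_one_sub_of_memSob_half hs0 hs ha hg hg12 hB, fun μ g hg hg12 _ hev => ?_⟩⟩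
  have hB : MemSob 0 (BuC a (etaS s 1 (sobNorm (-s) a)) g) := by
    rw [funext hev]
    exact (hg12.of_le (by norm_num)).const_mul _
  exact memSob_one_sub_of_memSob_half hs0 hs ha hg hg12 hB

end
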